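/- arXiv:1108.1102 — 2 statements merged into one kernel-verified Lean document; each statement's English description precedes it below -/
import Mathlib

section
/- Let k ≥ 2 and r ≥ 1 be integers, and let G be a graph. If m(G) < r - (r-1)/max{k, 2r+1}, then m₁(G,k) ≤ r, where m₁(G,k) := max over subgraphs H ⊆ G with v(H) ≥ k of e(H)/(v(H)-1). -/
/-!
A subgraph `H` on `v` vertices with `e` edges satisfies `e ≤ r (v - 1)`. If `v ≤ 2r` this is the
trivial bound `e ≤ v(v-1)/2`. Otherwise `v ≥ max{k, 2r+1}`, and the density hypothesis applied to
`H` itself gives `e < r v - (r-1) v / max{k, 2r+1} ≤ r v - (r-1) = r (v-1) + 1`; integrality of `e`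
finishes the argument.
-/

namespace SimpleGraph.Subgraph

variable {V : Type*} {G : SimpleGraph V}

theorem ncard_edgeSet_le_choose_two (H : G.Subgraph) (hH : H.verts.Finite) :
    H.edgeSet.ncard ≤ H.verts.ncard.choose 2 := by
  classical
  have := hH.fintype
  calc H.edgeSet.ncard = H.coe.edgeSet.ncard := by
        rw [← H.image_coe_edgeSet_coe,
          Set.ncard_image_of_injective _ (Sym2.map.injective Subtype.coe_injective)]
    _ = H.coe.edgeFinset.card := by rw [Set.ncard_eq_toFinset_card', edgeFinset]
    _ ≤ (Fintype.card H.verts).choose 2 := card_edgeFinset_le_card_choose_two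
    _ = H.verts.ncard.choose 2 := by rw [Set.ncard_eq_toFinset_card', Set.toFinset_card]

end SimpleGraph.Subgraph

theorem Nat.choose_two_le_mul_pred {v r : ℕ} (h : v ≤ 2 * r) : v.choose 2 ≤ r * (v - 1) := by
  rw [Nat.choose_two_right]
  calc v * (v - 1) / 2 ≤ 2 * r * (v - 1) / 2 := by gcongr
    _ = r * (v - 1) := by rw [mul_assoc, Nat.mul_div_cancel_left _ two_pos]

theorem Nat.le_mul_pred_of_div_lt {e v r M : ℕ} (hr : 1 ≤ r) (hM : 0 < M) (hMv : M ≤ v)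
    (h : (e : ℚ) / v < r - (r - 1) / M) : e ≤ r * (v - 1) := by
  have hv : (0 : ℚ) < v := by exact_mod_cast hM.trans_le hMv
  have hMQ : (0 : ℚ) < M := by exact_mod_cast hM
  have hr' : (1 : ℚ) ≤ r := by exact_mod_cast hr
  have hMv' : (M : ℚ) ≤ v := by exact_mod_cast hMv
  have hloss : (r - 1 : ℚ) ≤ (r - 1) / M * v := by
    rw [div_mul_eq_mul_div, le_div_iff₀ hMQ]
    exact mul_le_mul_of_nonneg_left hMv' (by linarith)
  have hlt : (e : ℚ) < r * ((v : ℚ) - 1) + 1 := by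
    rw [div_lt_iff₀ hv] at h
    nlinarith
  have hcast : ((r * (v - 1) : ℕ) : ℚ) = r * ((v : ℚ) - 1) := by
    rw [Nat.cast_mul, Nat.cast_pred (by omega)]
  rw [← hcast] at hlt
  exact Nat.lt_add_one_iff.mp (by exact_mod_cast hlt)

/-- if `m(G) < r - (r-1)/max{k, 2r+1}`, then `m₁(G,k) ≤ r`, i.e. every
subgraph `H ⊆ G` with `v(H) ≥ k` satisfies `e(H)/(v(H)-1) ≤ r`. -/
theorem stmt4 {V : Type*} [Fintype V] (G : SimpleGraph V) (k r : ℕ) (hk : 2 ≤ k) (hr : 1 ≤ r)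
    (h : ∀ H : G.Subgraph, H.verts.Nonempty →
      (H.edgeSet.ncard : ℚ) / (H.verts.ncard : ℚ)
        < (r : ℚ) - ((r : ℚ) - 1) / ((max k (2 * r + 1) : ℕ) : ℚ)) :
    ∀ H : G.Subgraph, k ≤ H.verts.ncard →
      (H.edgeSet.ncard : ℚ) / ((H.verts.ncard : ℚ) - 1) ≤ (r : ℚ) := by
  intro H hkv
  have hv : 2 ≤ H.verts.ncard := hk.trans hkv
  have hedges : H.edgeSet.ncard ≤ r * (H.verts.ncard - 1) := by
    rcases le_or_gt H.verts.ncard (2 * r) with hsmall | hlarge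
    · exact (H.ncard_edgeSet_le_choose_two H.verts.toFinite).trans
        (Nat.choose_two_le_mul_pred hsmall)
    · have hne : H.verts.Nonempty := Set.nonempty_of_ncard_ne_zero (by omega)
      exact Nat.le_mul_pred_of_div_lt hr (by omega) (max_le hkv hlarge) (h H hne)
  have hv' : (2 : ℚ) ≤ H.verts.ncard := by exact_mod_cast hv
  rw [div_le_iff₀ (by linarith), ← Nat.cast_pred (by omega)]
  exact_mod_cast hedges
end

section
/- Let a ≥ 2 and b ≥ (a-1)² + 1. Suppose the edges of a graph G are partitioned into a-1 forests F₁,...,F_{a-1}. Then G contains no K_{a,b} as a subgraph. -/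
/-! A forest on `n` vertices has fewer than `n` edges, so `a - 1` forests cover at most
`(a - 1)(a + b - 1)` edges of a copy of `K_{a,b}`, which has `ab` edges; this forces
`b ≤ (a - 1)²`. -/

open Finset

namespace SimpleGraph

variable {V : Type*} {G : SimpleGraph V}

lemma IsAcyclic.card_edgeFinset_lt [Fintype V] [Nonempty V] [Fintype G.edgeSet]
    (hG : G.IsAcyclic) : #G.edgeFinset < Fintype.card V := by
  classical
  obtain ⟨T, hGT, -, hT⟩ := connected_top.exists_isTree_le_of_le_of_isAcyclic le_top hG
  calc #G.edgeFinset ≤ #T.edgeFinset := card_le_card (edgeFinset_mono hGT)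
    _ < Fintype.card V := by have := hT.card_edgeFinset; omega

lemma card_edgeFinset_le_of_le_iSup_isAcyclic {ι : Type*} [Fintype ι] [Fintype V] [Nonempty V]
    [Fintype G.edgeSet] {F : ι → SimpleGraph V} (hF : ∀ i, (F i).IsAcyclic)
    (hG : G ≤ ⨆ i, F i) : #G.edgeFinset ≤ Fintype.card ι * (Fintype.card V - 1) := by
  classical
  have hsub : G.edgeFinset ⊆ univ.biUnion fun i ↦ (F i).edgeFinset := by
    intro e he
    induction e with
    | _ x y =>
      obtain ⟨i, hi⟩ := iSup_adj.1 (hG (mem_edgeFinset.1 he))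
      exact mem_biUnion.2 ⟨i, mem_univ i, mem_edgeFinset.2 hi⟩
  calc #G.edgeFinset ≤ ∑ i, #(F i).edgeFinset := (card_le_card hsub).trans card_biUnion_le
    _ ≤ ∑ _i : ι, (Fintype.card V - 1) :=
      sum_le_sum fun i _ ↦ Nat.le_sub_one_of_lt (hF i).card_edgeFinset_lt
    _ = Fintype.card ι * (Fintype.card V - 1) := by simp

lemma card_edgeFinset_completeBipartiteGraph {W₁ W₂ : Type*} [Fintype W₁] [Fintype W₂]
    [Fintype (completeBipartiteGraph W₁ W₂).edgeSet] :
    #(completeBipartiteGraph W₁ W₂).edgeFinset = Fintype.card W₁ * Fintype.card W₂ := by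
  have := encard_edgeSet_completeBipartiteGraph (W₁ := W₁) (W₂ := W₂)
  rw [← coe_edgeFinset, Set.encard_coe_eq_coe_finsetCard, ENat.card_eq_coe_fintype_card,
    ENat.card_eq_coe_fintype_card] at this
  exact_mod_cast this

end SimpleGraph

theorem stmt9_general {V : Type*} (G : SimpleGraph V) (a b : ℕ)
    (ha : 2 ≤ a) (hb : (a - 1) ^ 2 + 1 ≤ b)
    (F : Fin (a - 1) → SimpleGraph V)
    (hforest : ∀ i, (F i).IsAcyclic)
    (hcover : ∀ e : Sym2 V, e ∈ G.edgeSet ↔ ∃ i, e ∈ (F i).edgeSet) :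
    ¬ ∃ f : (Fin a ⊕ Fin b) ↪ V, ∀ x y,
      (completeBipartiteGraph (Fin a) (Fin b)).Adj x y → G.Adj (f x) (f y) := by
  classical
  rintro ⟨f, hf⟩
  have : Nonempty (Fin a ⊕ Fin b) := ⟨.inl ⟨0, by omega⟩⟩
  have hK : completeBipartiteGraph (Fin a) (Fin b) ≤ ⨆ i, (F i).comap f :=
    fun x y hxy ↦ SimpleGraph.iSup_adj.2 ((hcover s(f x, f y)).1 (hf x y hxy))
  have hcount := SimpleGraph.card_edgeFinset_le_of_le_iSup_isAcyclic
    (fun i ↦ (hforest i).of_comap f) hK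
  simp only [SimpleGraph.card_edgeFinset_completeBipartiteGraph, Fintype.card_fin,
    Fintype.card_sum] at hcount
  obtain ⟨c, rfl⟩ : ∃ c, a = c + 1 := ⟨a - 1, by omega⟩
  simp only [Nat.add_sub_cancel] at hb hcount
  rw [show c + 1 + b - 1 = c + b by omega] at hcount
  nlinarith

/-- if `a ≥ 2`, `b ≥ (a-1)² + 1`, and the edges of `G` are partitioned into
`a-1` forests, then `G` contains no `K_{a,b}` as a subgraph. -/
theorem stmt9 {V : Type*} [Fintype V] (G : SimpleGraph V) (a b : ℕ)
    (ha : 2 ≤ a) (hb : (a - 1) ^ 2 + 1 ≤ b)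
    (F : Fin (a - 1) → SimpleGraph V)
    (hle : ∀ i, F i ≤ G)
    (hforest : ∀ i, (F i).IsAcyclic)
    (hcover : ∀ e : Sym2 V, e ∈ G.edgeSet ↔ ∃ i, e ∈ (F i).edgeSet)
    (hdisj : ∀ i j, i ≠ j → Disjoint (F i).edgeSet (F j).edgeSet) :
    ¬ ∃ f : (Fin a ⊕ Fin b) ↪ V, ∀ x y,
      (completeBipartiteGraph (Fin a) (Fin b)).Adj x y → G.Adj (f x) (f y) :=
  stmt9_general G a b ha hb F hforest hcover
end
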